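/- The trace on the qubit subalgebra is independent of the reference state: let ψ ∈ H be a unit vector supported on the even integers (ψ(ℓ) = 0 for all odd ℓ, ‖ψ‖ = 1), and let ψ⊥ ∈ H be the vector defined by ψ⊥(ℓ) = ψ(ℓ+1) for all ℓ ∈ ℤ (so ψ⊥ is a unit vector supported on the odd integers). Then a₃ ψ = ψ, and for all complex numbers c₀, c₁, c₂, c₃, setting a := c₀•1 + c₁•a₁ + c₂•a₂ + c₃•a₃, one has ⟪ψ, a ψ⟫ + ⟪ψ⊥, a ψ⊥⟫ = 2·c₀; in particular the resulting trace satisfies Tr_ψ(1) = 2 and Tr_ψ(aᵢ) = 0 for i = 1,2,3, independently of the choice of ψ. -/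

import Mathlib

open Complex

noncomputable section

/-- The Hilbert space `H := ℓ²(ℤ, ℂ)`. -/
abbrev H : Type := lp (fun _ : ℤ => ℂ) 2

/-- The orthonormal basis vectors `e ℓ = lp.single 2 ℓ 1`. -/
def e (ℓ : ℤ) : H := lp.single 2 ℓ 1

/-- `a₃ := U(π)`. -/
def a₃ (U : ℝ → (H →L[ℂ] H)) : H →L[ℂ] H := U Real.pi

/-- `a₊ := (1/2) • ((1 − U(π)) ∘ V*)`. -/
def aPlus (U : ℝ → (H →L[ℂ] H)) (V : unitary (H →L[ℂ] H)) : H →L[ℂ] H :=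
  ((1 : ℂ) / 2) • ((1 - U Real.pi) ∘L star (V : H →L[ℂ] H))

/-- `a₋ := (1/2) • ((1 + U(π)) ∘ V)`. -/
def aMinus (U : ℝ → (H →L[ℂ] H)) (V : unitary (H →L[ℂ] H)) : H →L[ℂ] H :=
  ((1 : ℂ) / 2) • ((1 + U Real.pi) ∘L (V : H →L[ℂ] H))

/-- `a₁ := a₊ + a₋`. -/
def a₁ (U : ℝ → (H →L[ℂ] H)) (V : unitary (H →L[ℂ] H)) : H →L[ℂ] H :=
  aPlus U V + aMinus U V

/-- `a₂ := −i•a₊ + i•a₋`. -/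
def a₂ (U : ℝ → (H →L[ℂ] H)) (V : unitary (H →L[ℂ] H)) : H →L[ℂ] H :=
  (-Complex.I) • aPlus U V + Complex.I • aMinus U V

/-!
`a₃ = U(π)` acts on `ℓ²(ℤ)` as the parity `(-1)^ℓ`: it is self-adjoint, fixes vectors supported on
the even integers and anticommutes with the shift `V`. Hence `ψ⊥ = V* ψ` is a unit vector orthogonal
to `ψ` with `a₃ ψ⊥ = -ψ⊥`, and `a₊`, `a₋` are the matrix units `ψ ↦ ψ⊥ ↦ 0`, `ψ⊥ ↦ ψ ↦ 0`. So on
`span {ψ, ψ⊥}` the operators `a₁, a₂, a₃` are traceless `2 × 2` matrices, while `1` has trace `2`.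
-/

open scoped ENNReal InnerProductSpace

namespace lp

variable {ι : Type*}

theorem apply_eq_of_hasSum_single [DecidableEq ι] {E : ι → Type*} [∀ i, NormedAddCommGroup (E i)]
    {p : ℝ≥0∞} [Fact (1 ≤ p)] {f : ∀ i, E i} {x : lp E p}
    (h : HasSum (fun i ↦ lp.single p i (f i)) x) (i : ι) : x i = f i := by
  have hi : HasSum (fun j ↦ (lp.single p j (f j) : ∀ i, E i) i) (x i) :=
    h.map ((Pi.evalAddMonoidHom E i).comp (lp.coeFnAddMonoidHom E p))
      (lipschitzWith_one_eval p i).continuous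
  rw [hi.unique (hasSum_single i fun j hj ↦ lp.single_apply_ne p j (f j) hj.symm),
    lp.single_apply_self]

theorem apply_eq_of_apply_single [DecidableEq ι] {𝕜 : Type*} [NormedField 𝕜] {p : ℝ≥0∞}
    [Fact (1 ≤ p)] (hp : p ≠ ∞) {A : lp (fun _ : ι ↦ 𝕜) p →L[𝕜] lp (fun _ : ι ↦ 𝕜) p}
    (σ : ι ≃ ι) (c : ι → 𝕜) (hA : ∀ k, A (lp.single p k 1) = c k • lp.single p (σ k) 1)
    (x : lp (fun _ : ι ↦ 𝕜) p) (k : ι) : A x (σ k) = c k * x k := by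
  have hsingle (j : ι) (a : 𝕜) :
      lp.single (E := fun _ ↦ 𝕜) p j a = a • lp.single p j 1 := by
    rw [← lp.single_smul, smul_eq_mul, mul_one]
  have hsum : HasSum (fun j ↦ lp.single p (σ j) (c j * x j)) (A x) := by
    refine ((lp.hasSum_single hp x).mapL A).congr_fun fun j ↦ ?_
    rw [hsingle (σ j), hsingle j (x j), map_smul, hA, smul_smul, mul_comm]
  have hsum' : HasSum (fun i ↦ lp.single p i (c (σ.symm i) * x (σ.symm i))) (A x) :=
    σ.hasSum_iff.mp (by simpa only [Function.comp_def, Equiv.symm_apply_apply] using hsum)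
  rw [apply_eq_of_hasSum_single hsum', Equiv.symm_apply_apply]

theorem isSelfAdjoint_of_apply_eq_ofReal_mul {𝕜 : Type*} [RCLike 𝕜]
    {A : lp (fun _ : ι ↦ 𝕜) 2 →L[𝕜] lp (fun _ : ι ↦ 𝕜) 2} (d : ι → ℝ)
    (hA : ∀ x k, A x k = d k * x k) : IsSelfAdjoint A := by
  refine ContinuousLinearMap.isSelfAdjoint_iff_isSymmetric.mpr fun x y ↦ ?_
  simp only [ContinuousLinearMap.coe_coe, lp.inner_eq_tsum, hA]
  refine tsum_congr fun k ↦ ?_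
  simp only [RCLike.inner_apply, map_mul, RCLike.conj_ofReal]
  ring

end lp

section Ladder

variable {E : Type*} [NormedAddCommGroup E] [InnerProductSpace ℂ E]

theorem inner_add_inner_eq_two_mul_of_ladder {Ap Am Z : E →L[ℂ] E} {u v : E}
    (hu : ‖u‖ = 1) (hv : ‖v‖ = 1) (huv : ⟪u, v⟫_ℂ = 0)
    (hApu : Ap u = v) (hApv : Ap v = 0) (hAmu : Am u = 0) (hAmv : Am v = u)
    (hZu : Z u = u) (hZv : Z v = -v) (c₀ c₁ c₂ c₃ : ℂ) :
    ⟪u, (c₀ • 1 + c₁ • (Ap + Am) + c₂ • ((-I) • Ap + I • Am) + c₃ • Z : E →L[ℂ] E) u⟫_ℂ +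
      ⟪v, (c₀ • 1 + c₁ • (Ap + Am) + c₂ • ((-I) • Ap + I • Am) + c₃ • Z : E →L[ℂ] E) v⟫_ℂ =
      2 * c₀ := by
  have hvu : ⟪v, u⟫_ℂ = 0 := by rw [← inner_conj_symm, huv, map_zero]
  simp only [add_apply, smul_apply, one_apply_eq_self, hApu, hApv, hAmu, hAmv, hZu, hZv,
    smul_zero, inner_add_right, inner_smul_right, inner_neg_right, inner_zero_right,
    inner_self_eq_norm_sq_to_K, hu, hv, huv, hvu]
  push_cast
  ring

variable [CompleteSpace E] {P W : E →L[ℂ] E}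

theorem apply_star_apply_of_anticomm (hW : W ∈ unitary (E →L[ℂ] E))
    (hPW : ∀ x, P (W x) = -W (P x)) (x : E) : P (star W x) = -star W (P x) := by
  have h := congrArg ⇑(star W) (hPW (star W x))
  rw [← mul_apply_eq_comp W, Unitary.mul_star_self_of_mem hW, one_apply_eq_self, map_neg,
    ← mul_apply_eq_comp (star W) W, Unitary.star_mul_self_of_mem hW, one_apply_eq_self] at h
  rw [h, neg_neg]

theorem inner_star_apply_eq_zero_of_anticomm (hW : W ∈ unitary (E →L[ℂ] E))
    (hP : IsSelfAdjoint P) (hPW : ∀ x, P (W x) = -W (P x)) {u : E} (hPu : P u = u) :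
    ⟪u, star W u⟫_ℂ = 0 := by
  have h : ⟪u, star W u⟫_ℂ = -⟪u, star W u⟫_ℂ :=
    calc ⟪u, star W u⟫_ℂ = ⟪P u, star W u⟫_ℂ := by rw [hPu]
      _ = ⟪u, P (star W u)⟫_ℂ := hP.isSymmetric u _
      _ = -⟪u, star W u⟫_ℂ := by rw [apply_star_apply_of_anticomm hW hPW, hPu, inner_neg_right]
  exact CharZero.eq_neg_self_iff.mp h

end Ladder

theorem exp_I_mul_intCast_mul_pi (ℓ : ℤ) : exp (I * ℓ * Real.pi) = (-1) ^ ℓ := by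
  rw [show I * ℓ * Real.pi = ℓ * (Real.pi * I) by ring, exp_int_mul, exp_pi_mul_I]

section QubitOperators

variable {U : ℝ → (H →L[ℂ] H)} {V : unitary (H →L[ℂ] H)}

theorem a₃_apply (hU : ∀ ℓ : ℤ, U Real.pi (e ℓ) = exp (I * ℓ * Real.pi) • e ℓ) (x : H) (ℓ : ℤ) :
    a₃ U x ℓ = (-1) ^ ℓ * x ℓ :=
  lp.apply_eq_of_apply_single (by simp) (Equiv.refl ℤ) _
    (fun k ↦ by rw [← exp_I_mul_intCast_mul_pi]; exact hU k) x ℓ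

theorem isSelfAdjoint_a₃ (hU : ∀ ℓ : ℤ, U Real.pi (e ℓ) = exp (I * ℓ * Real.pi) • e ℓ) :
    IsSelfAdjoint (a₃ U) :=
  lp.isSelfAdjoint_of_apply_eq_ofReal_mul (fun ℓ ↦ (-1) ^ ℓ) fun x ℓ ↦ by
    rw [a₃_apply hU]; push_cast; rfl

theorem a₃_apply_of_odd_eq_zero (hU : ∀ ℓ : ℤ, U Real.pi (e ℓ) = exp (I * ℓ * Real.pi) • e ℓ)
    {x : H} (hx : ∀ ℓ : ℤ, Odd ℓ → x ℓ = 0) : a₃ U x = x := by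
  ext ℓ
  rw [a₃_apply hU]
  rcases Int.even_or_odd ℓ with h | h
  · rw [h.neg_one_zpow, one_mul]
  · rw [hx ℓ h, mul_zero]

theorem shift_apply_add_one (hV : ∀ ℓ : ℤ, (V : H →L[ℂ] H) (e ℓ) = e (ℓ + 1)) (x : H) (ℓ : ℤ) :
    (V : H →L[ℂ] H) x (ℓ + 1) = x ℓ := by
  simpa using lp.apply_eq_of_apply_single (by simp) (Equiv.addRight 1) 1
    (fun k ↦ by rw [Pi.one_apply, one_smul]; exact hV k) x ℓ

theorem star_shift_apply (hV : ∀ ℓ : ℤ, (V : H →L[ℂ] H) (e ℓ) = e (ℓ + 1)) (x : H) (ℓ : ℤ) :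
    star (V : H →L[ℂ] H) x ℓ = x (ℓ + 1) := by
  rw [← shift_apply_add_one hV, ← mul_apply_eq_comp, Unitary.mul_star_self_of_mem V.2,
    one_apply_eq_self]

theorem a₃_apply_shift (hU : ∀ ℓ : ℤ, U Real.pi (e ℓ) = exp (I * ℓ * Real.pi) • e ℓ)
    (hV : ∀ ℓ : ℤ, (V : H →L[ℂ] H) (e ℓ) = e (ℓ + 1)) (x : H) :
    a₃ U ((V : H →L[ℂ] H) x) = -(V : H →L[ℂ] H) (a₃ U x) := by
  ext ℓ
  obtain ⟨k, rfl⟩ : ∃ k, ℓ = k + 1 := ⟨ℓ - 1, by ring⟩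
  rw [a₃_apply hU, lp.coeFn_neg, Pi.neg_apply, shift_apply_add_one hV, shift_apply_add_one hV,
    a₃_apply hU, zpow_add_one₀ (by norm_num)]
  ring

theorem a₃_apply_star_eq_neg (hUV : ∀ x, a₃ U ((V : H →L[ℂ] H) x) = -(V : H →L[ℂ] H) (a₃ U x))
    {u : H} (hu : a₃ U u = u) : a₃ U (star (V : H →L[ℂ] H) u) = -star (V : H →L[ℂ] H) u := by
  rw [apply_star_apply_of_anticomm V.2 hUV, hu]

theorem aPlus_apply_eq_star (hUV : ∀ x, a₃ U ((V : H →L[ℂ] H) x) = -(V : H →L[ℂ] H) (a₃ U x))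
    {u : H} (hu : a₃ U u = u) : aPlus U V u = star (V : H →L[ℂ] H) u := by
  rw [aPlus, show U Real.pi = a₃ U from rfl, smul_apply,
    ContinuousLinearMap.comp_apply, sub_apply, one_apply_eq_self,
    a₃_apply_star_eq_neg hUV hu]
  module

theorem aPlus_apply_star_eq_zero
    (hUV : ∀ x, a₃ U ((V : H →L[ℂ] H) x) = -(V : H →L[ℂ] H) (a₃ U x))
    {u : H} (hu : a₃ U u = u) : aPlus U V (star (V : H →L[ℂ] H) u) = 0 := by
  rw [aPlus, show U Real.pi = a₃ U from rfl, smul_apply,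
    ContinuousLinearMap.comp_apply, sub_apply, one_apply_eq_self,
    apply_star_apply_of_anticomm V.2 hUV, a₃_apply_star_eq_neg hUV hu, map_neg]
  module

theorem aMinus_apply_eq_zero (hUV : ∀ x, a₃ U ((V : H →L[ℂ] H) x) = -(V : H →L[ℂ] H) (a₃ U x))
    {u : H} (hu : a₃ U u = u) : aMinus U V u = 0 := by
  rw [aMinus, show U Real.pi = a₃ U from rfl, smul_apply,
    ContinuousLinearMap.comp_apply, add_apply, one_apply_eq_self, hUV, hu]
  module

theorem aMinus_apply_star_eq {u : H} (hu : a₃ U u = u) :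
    aMinus U V (star (V : H →L[ℂ] H) u) = u := by
  rw [aMinus, show U Real.pi = a₃ U from rfl, smul_apply, ContinuousLinearMap.comp_apply,
    ← mul_apply_eq_comp (V : H →L[ℂ] H), Unitary.mul_star_self_of_mem V.2, one_apply_eq_self,
    add_apply, one_apply_eq_self, hu]
  module

end QubitOperators

/-- **The trace on the qubit subalgebra is independent of the reference state:** for
any unit vector `ψ` supported on the even integers, with `ψ⊥ (ℓ) = ψ (ℓ+1)`, one has
`a₃ ψ = ψ`, and for `a = c₀•1 + c₁•a₁ + c₂•a₂ + c₃•a₃`,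
`⟪ψ, a ψ⟫ + ⟪ψ⊥, a ψ⊥⟫ = 2·c₀`; in particular `Tr_ψ(1) = 2` and `Tr_ψ(aᵢ) = 0`. -/
theorem qubit_trace_reference_state_independent
    (U : ℝ → (H →L[ℂ] H)) (V : unitary (H →L[ℂ] H))
    (hU : ∀ (θ : ℝ) (ℓ : ℤ), U θ (e ℓ) = Complex.exp (Complex.I * ℓ * θ) • e ℓ)
    (hV : ∀ ℓ : ℤ, (V : H →L[ℂ] H) (e ℓ) = e (ℓ + 1))
    (ψ : H) (hψnorm : ‖ψ‖ = 1) (hψeven : ∀ ℓ : ℤ, Odd ℓ → ψ ℓ = 0)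
    (ψp : H) (hψp : ∀ ℓ : ℤ, ψp ℓ = ψ (ℓ + 1)) :
    a₃ U ψ = ψ ∧
    ∀ c₀ c₁ c₂ c₃ : ℂ,
      (inner ℂ ψ ((c₀ • (1 : H →L[ℂ] H) + c₁ • a₁ U V + c₂ • a₂ U V + c₃ • a₃ U) ψ) : ℂ) +
        (inner ℂ ψp ((c₀ • (1 : H →L[ℂ] H) + c₁ • a₁ U V + c₂ • a₂ U V + c₃ • a₃ U) ψp) : ℂ)
        = 2 * c₀ := by
  have hUV := a₃_apply_shift (hU Real.pi) hV
  have hψ : a₃ U ψ = ψ := a₃_apply_of_odd_eq_zero (hU Real.pi) hψeven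
  obtain rfl : ψp = star (V : H →L[ℂ] H) ψ := by
    ext ℓ
    rw [hψp, star_shift_apply hV]
  refine ⟨hψ, inner_add_inner_eq_two_mul_of_ladder hψnorm ?_ ?_ (aPlus_apply_eq_star hUV hψ)
    (aPlus_apply_star_eq_zero hUV hψ) (aMinus_apply_eq_zero hUV hψ) (aMinus_apply_star_eq hψ)
    hψ (a₃_apply_star_eq_neg hUV hψ)⟩
  · rw [← Unitary.coe_star, Unitary.norm_map, hψnorm]
  · exact inner_star_apply_eq_zero_of_anticomm V.2 (isSelfAdjoint_a₃ (hU Real.pi)) hUV hψ
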